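/- Let φ be a Schwartz function on ℝ with φ ≥ 0, ∫ φ(y) dy = 1, and Fourier transform φ̂ compactly supported with φ̂(p) = 0 whenever |p| ≥ ρ_φ for some ρ_φ > 0. For L ∈ ℕ and R > 0 define the lattice averaging kernel ϕ(ξ) := R^{−1} Σ_{n∈ℤ} φ((ξ − Ln)/R), ξ ∈ ℝ. If R ≥ 2ρ_φ, then for every k ∈ Λ_L* and every ξ ∈ ℝ: Σ_{x∈Λ_L} ϕ(ξ − x) e^{−2πix·k} = e^{−2πiξ·k} φ̂(−Rk). -/

import Mathlib

open Real MeasureTheory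

/-- The discrete circle of `L` sites, represented by integers:
`{−(L−1)/2, …, (L−1)/2}` for odd `L` and `{−L/2+1, …, L/2}` for even `L`. -/
noncomputable def Lambda (L : ℕ) : Finset ℤ := Finset.Ioc ((L : ℤ) / 2 - L) ((L : ℤ) / 2)

/-- The lattice averaging kernel `ϕ(ξ) = R⁻¹ Σ_{n∈ℤ} φ((ξ − Ln)/R)`. -/
noncomputable def latticeKernel (φ : SchwartzMap ℝ ℝ) (L R : ℝ) (ξ : ℝ) : ℝ :=
  R⁻¹ * ∑' n : ℤ, φ ((ξ - L * n) / R)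

/-- The Fourier transform `φ̂(p) = ∫ φ(y) e^{−2πipy} dy`. -/
noncomputable def fourierHat (φ : SchwartzMap ℝ ℝ) (p : ℝ) : ℂ :=
  ∫ y : ℝ, (φ y : ℂ) * Complex.exp (-(2 * π * p * y) * Complex.I)

/-!
For `k = p/L` put `f(y) = φ((ξ - y)/R) e^{-2πiyk}`. A change of variables gives
`𝓕f(w) = R e^{-2πiξ(k+w)} φ̂(-R(k+w))`; since `|k| ≤ 1/2` and `R ≥ 2ρ`, this vanishes at every
nonzero integer `w`, so Poisson summation collapses to `∑_{m ∈ ℤ} f(m) = 𝓕f(0)`. On the other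
side, `e^{-2πiyk}` is `L`-periodic, so writing `m = x + nL` with `x ∈ Λ_L` turns the left-hand side
of the theorem into `R⁻¹ ∑_{m ∈ ℤ} f(m)`.
-/

open Filter Asymptotics FourierTransform
open scoped SchwartzMap

theorem SchwartzMap.isBigO_cocompact_comp_sub_div {F : Type*} [NormedAddCommGroup F]
    [NormedSpace ℝ F] (φ : 𝓢(ℝ, F)) (ξ : ℝ) {R : ℝ} (hR : R ≠ 0) (s : ℝ) :
    (fun y => φ ((ξ - y) / R)) =O[cocompact ℝ] (|·| ^ s) := by
  have hanti : AntilipschitzWith ‖R‖₊ (fun y : ℝ => (ξ - y) * R⁻¹) :=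
    AntilipschitzWith.of_le_mul_dist fun x y => by
      rw [Real.dist_eq, Real.dist_eq, coe_nnnorm, Real.norm_eq_abs, ← sub_mul,
        sub_sub_sub_cancel_left, abs_mul, abs_sub_comm, abs_inv, mul_left_comm,
        mul_inv_cancel₀ (abs_ne_zero.mpr hR), mul_one]
  exact ((SchwartzMap.compCLMOfAntilipschitz ℝ (by fun_prop) hanti φ).isBigO_cocompact_rpow
    s).congr_left fun y => by simp [div_eq_mul_inv]

theorem tsum_int_eq_fourier_zero {f : ℝ → ℂ} (hc : Continuous f) {b : ℝ} (hb : 1 < b)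
    (hf : f =O[cocompact ℝ] (|·| ^ (-b))) (hF : ∀ n : ℤ, n ≠ 0 → 𝓕 f n = 0) :
    ∑' n : ℤ, f n = 𝓕 f 0 := by
  have hFsum : Summable fun n : ℤ => 𝓕 f n :=
    summable_of_ne_finset_zero (s := {0}) fun n hn => hF n (by simpa using hn)
  simpa [tsum_eq_single 0 hF] using
    Real.tsum_eq_tsum_fourier_of_rpow_decay_of_summable hc hb hf hFsum 0

theorem fourier_mul_exp_comp_sub_div (g : ℝ → ℂ) {R : ℝ} (hR : R ≠ 0) (ξ k w : ℝ) :
    𝓕 (fun y => g ((ξ - y) / R) * Complex.exp (-(2 * π * y * k) * Complex.I)) w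
      = |R| * Complex.exp (-(2 * π * ξ * (k + w)) * Complex.I) * 𝓕 g (-(R * (k + w))) := by
  set G : ℝ → ℂ := fun u => Complex.exp ((-2 * π * (ξ - R * u) * (k + w) : ℝ) * Complex.I) * g u
  have hG : ∀ u, G u = Complex.exp (-(2 * π * ξ * (k + w)) * Complex.I)
      * (Complex.exp ((-2 * π * u * (-(R * (k + w))) : ℝ) * Complex.I) • g u) := by
    intro u
    simp only [G]
    rw [smul_eq_mul, ← mul_assoc, ← Complex.exp_add]
    congr 2
    push_cast
    ring
  rw [fourier_real_eq_integral_exp_smul, fourier_real_eq_integral_exp_smul]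
  calc ∫ v : ℝ, Complex.exp ((-2 * π * v * w : ℝ) * Complex.I)
          • (g ((ξ - v) / R) * Complex.exp (-(2 * π * v * k) * Complex.I))
      = ∫ v : ℝ, G ((ξ - v) / R) := by
        congr 1 with v
        simp only [G]
        rw [smul_eq_mul, mul_left_comm, ← Complex.exp_add, mul_comm, mul_div_cancel₀ _ hR,
          sub_sub_cancel]
        congr 2
        push_cast
        ring
    _ = |R| • ∫ u : ℝ, G u := by
        rw [integral_sub_left_eq_self (fun v => G (v / R)), Measure.integral_comp_div]
    _ = _ := by
        simp only [hG, integral_const_mul, Complex.real_smul]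
        ring

theorem fourierHat_eq_fourier (φ : 𝓢(ℝ, ℝ)) (p : ℝ) :
    fourierHat φ p = 𝓕 (fun y => (φ y : ℂ)) p := by
  rw [fourierHat, fourier_real_eq_integral_exp_smul]
  congr 1 with y
  rw [smul_eq_mul, mul_comm]
  congr 2
  push_cast
  ring

noncomputable def Int.IocProdEquiv (a : ℤ) {p : ℤ} (hp : 0 < p) :
    Finset.Ioc a (a + p) × ℤ ≃ ℤ where
  toFun q := q.1 + q.2 * p
  invFun m := (⟨toIocMod hp a m, by simpa using toIocMod_mem_Ioc hp a m⟩, toIocDiv hp a m)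
  left_inv := by
    rintro ⟨⟨x, hx⟩, n⟩
    have hx' : x ∈ Set.Ioc a (a + p) := by simpa using hx
    ext
    · exact (toIocMod_eq_iff hp).mpr ⟨hx', n, by rw [smul_eq_mul]⟩
    · exact (toIocDiv_eq_iff hp).mpr (by simpa using hx')
  right_inv m := toIocMod_add_toIocDiv_zsmul hp a m

theorem Int.sum_Ioc_tsum_add_mul {E : Type*} [AddCommGroup E] [UniformSpace E]
    [IsUniformAddGroup E] [CompleteSpace E] [T2Space E] (a : ℤ) {p : ℤ} (hp : 0 < p)
    {g : ℤ → E} (hg : Summable g) :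
    ∑ x ∈ Finset.Ioc a (a + p), ∑' n : ℤ, g (x + n * p) = ∑' m : ℤ, g m := by
  have hsum : Summable (g ∘ Int.IocProdEquiv a hp) := (Equiv.summable_iff _).mpr hg
  rw [← Finset.tsum_subtype, ← (Int.IocProdEquiv a hp).tsum_eq]
  exact (hsum.tsum_prod' hsum.prod_factor).symm

theorem sum_Lambda_tsum_add_mul {E : Type*} [AddCommGroup E] [UniformSpace E]
    [IsUniformAddGroup E] [CompleteSpace E] [T2Space E] {L : ℕ} (hL : 0 < L)
    {g : ℤ → E} (hg : Summable g) :
    ∑ x ∈ Lambda L, ∑' n : ℤ, g (x + n * L) = ∑' m : ℤ, g m := by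
  have := Int.sum_Ioc_tsum_add_mul ((L : ℤ) / 2 - L) (Nat.cast_pos.mpr hL) hg
  rwa [sub_add_cancel] at this

theorem abs_div_le_half_of_mem_Lambda {L : ℕ} {p : ℤ} (hp : p ∈ Lambda L) :
    |(p : ℝ) / L| ≤ 1 / 2 := by
  rw [Lambda, Finset.mem_Ioc] at hp
  have hL : (0 : ℝ) < L := by exact_mod_cast (show 0 < L by omega)
  have hlo : -(L : ℝ) ≤ 2 * p := by exact_mod_cast (show -(L : ℤ) ≤ 2 * p by omega)
  have hhi : 2 * (p : ℝ) ≤ L := by exact_mod_cast (show 2 * p ≤ (L : ℤ) by omega)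
  rw [abs_div, Nat.abs_cast, div_le_iff₀ hL, abs_le]
  constructor <;> linarith

theorem one_half_le_abs_add_intCast {k : ℝ} (hk : |k| ≤ 1 / 2) {n : ℤ} (hn : n ≠ 0) :
    1 / 2 ≤ |k + n| := by
  have hn1 : (1 : ℝ) ≤ |(n : ℝ)| := by exact_mod_cast Int.one_le_abs hn
  have := abs_sub_abs_le_abs_sub (n : ℝ) (-k)
  rw [abs_neg, sub_neg_eq_add, add_comm] at this
  linarith

theorem periodic_exp_neg_two_pi_mul_int_div (p : ℤ) {L : ℝ} (hL : L ≠ 0) :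
    Function.Periodic
      (fun x : ℝ => Complex.exp (-(2 * π * x * ((p / L : ℝ) : ℂ)) * Complex.I)) L := by
  intro x
  have hLC : (L : ℂ) ≠ 0 := by exact_mod_cast hL
  have h : -(2 * π * ((x + L : ℝ) : ℂ) * ((p / L : ℝ) : ℂ)) * Complex.I
      = -(2 * π * x * ((p / L : ℝ) : ℂ)) * Complex.I + ((-p : ℤ) : ℂ) * (2 * π * Complex.I) := by
    push_cast
    field_simp
    ring
  simp only [h, Complex.exp_add, Complex.exp_int_mul_two_pi_mul_I, mul_one]

theorem latticeKernel_mul_eq_tsum (φ : 𝓢(ℝ, ℝ)) {L : ℝ} (R : ℝ) {χ : ℝ → ℂ}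
    (hχ : Function.Periodic χ L) (ξ x : ℝ) :
    (latticeKernel φ L R (ξ - x) : ℂ) * χ x
      = (R : ℂ)⁻¹ * ∑' n : ℤ, (φ ((ξ - (x + n * L)) / R) : ℂ) * χ (x + n * L) := by
  rw [latticeKernel, Complex.ofReal_mul, Complex.ofReal_tsum, Complex.ofReal_inv, mul_assoc,
    ← tsum_mul_right]
  congr 2 with n
  rw [hχ.int_mul n x, sub_sub, mul_comm (n : ℝ) L]

theorem latticeKernel_discrete_fourier_general (φ : SchwartzMap ℝ ℝ)
    (ρ : ℝ) (hρ : 0 < ρ)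
    (hsupp : ∀ p : ℝ, ρ ≤ |p| → fourierHat φ p = 0)
    (L : ℕ) (hL : 0 < L) (R : ℝ) (hR : 2 * ρ ≤ R) :
    ∀ p ∈ Lambda L, ∀ ξ : ℝ,
      ∑ x ∈ Lambda L,
          (latticeKernel φ L R (ξ - x) : ℂ)
            * Complex.exp (-(2 * π * (x : ℝ) * ((p : ℝ) / L)) * Complex.I)
        = Complex.exp (-(2 * π * ξ * ((p : ℝ) / L)) * Complex.I)
            * fourierHat φ (-(R * ((p : ℝ) / L))) := by
  intro p hp ξ
  -- read the frequency `↑↑p / ↑L : ℂ` as the cast of the real number `k = p / L`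
  rw [← Complex.ofReal_natCast, ← Complex.ofReal_div]
  have hR0 : 0 < R := by linarith
  set k : ℝ := (p : ℝ) / L
  set f : ℝ → ℂ := fun y => (φ ((ξ - y) / R) : ℂ) * Complex.exp (-(2 * π * y * k) * Complex.I)
  have hFf : ∀ w : ℝ, 𝓕 f w = R * Complex.exp (-(2 * π * ξ * (k + w)) * Complex.I)
      * fourierHat φ (-(R * (k + w))) := fun w => by
    have := fourier_mul_exp_comp_sub_div (fun y => (φ y : ℂ)) hR0.ne' ξ k w
    rwa [← fourierHat_eq_fourier, abs_of_pos hR0] at this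
  have hFf_int : ∀ n : ℤ, n ≠ 0 → 𝓕 f n = 0 := fun n hn => by
    have hk := one_half_le_abs_add_intCast (abs_div_le_half_of_mem_Lambda hp) hn
    rw [hFf, hsupp _ (by rw [abs_neg, abs_mul, abs_of_pos hR0]; nlinarith), mul_zero]
  have hf_decay : f =O[cocompact ℝ] (|·| ^ (-2 : ℝ)) := by
    refine isBigO_norm_left.mp ((φ.isBigO_cocompact_comp_sub_div ξ hR0.ne' _).norm_left.congr_left
      fun y => ?_)
    simp [f, Complex.norm_exp]
  have hf_sum : Summable fun m : ℤ => f m :=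
    summable_of_isBigO (Real.summable_abs_int_rpow one_lt_two)
      (hf_decay.comp_tendsto Int.tendsto_coe_cofinite)
  calc _ = (R : ℂ)⁻¹ * ∑ x ∈ Lambda L, ∑' n : ℤ, f (x + n * L) := by
        rw [Finset.mul_sum]
        exact Finset.sum_congr rfl fun x _ => latticeKernel_mul_eq_tsum φ R
          (periodic_exp_neg_two_pi_mul_int_div p (Nat.cast_ne_zero.mpr hL.ne')) ξ x
    _ = (R : ℂ)⁻¹ * 𝓕 f 0 := by
        rw [← tsum_int_eq_fourier_zero (by fun_prop) one_lt_two hf_decay hFf_int,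
          ← sum_Lambda_tsum_add_mul hL hf_sum]
        push_cast
        rfl
    _ = _ := by
        rw [hFf 0, Complex.ofReal_zero, add_zero, add_zero, ← mul_assoc, ← mul_assoc,
          inv_mul_cancel₀ (by exact_mod_cast hR0.ne'), one_mul]

/-- If `R ≥ 2ρ_φ`, then for every `k ∈ Λ_L*` (written `k = p/L` with
`p ∈ Λ_L`) and every `ξ ∈ ℝ`:
`Σ_{x∈Λ_L} ϕ(ξ − x) e^{−2πix·k} = e^{−2πiξ·k} φ̂(−Rk)`. -/
theorem latticeKernel_discrete_fourier (φ : SchwartzMap ℝ ℝ)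
    (hpos : ∀ y : ℝ, 0 ≤ φ y)
    (hnorm : ∫ y : ℝ, φ y = 1)
    (ρ : ℝ) (hρ : 0 < ρ)
    (hsupp : ∀ p : ℝ, ρ ≤ |p| → fourierHat φ p = 0)
    (L : ℕ) (hL : 0 < L) (R : ℝ) (hR : 2 * ρ ≤ R) :
    ∀ p ∈ Lambda L, ∀ ξ : ℝ,
      ∑ x ∈ Lambda L,
          (latticeKernel φ L R (ξ - x) : ℂ)
            * Complex.exp (-(2 * π * (x : ℝ) * ((p : ℝ) / L)) * Complex.I)
        = Complex.exp (-(2 * π * ξ * ((p : ℝ) / L)) * Complex.I)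
            * fourierHat φ (-(R * ((p : ℝ) / L))) :=
  latticeKernel_discrete_fourier_general φ ρ hρ hsupp L hL R hR
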